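/- Let M = (S, f, s₀, 𝔉) be a deterministic Muller automaton over Bool in which every state is reachable from s₀. Then μ(L(M)) = 0 if and only if no leaf connected component g of M satisfies g ∈ 𝔉. -/

import Mathlib

open MeasureTheory Filter

/-- The fair-coin product probability measure on Cantor space `ℕ → Bool`,
constructed as the pushforward of Lebesgue measure on `[0,1)` under binary expansion. -/
noncomputable def mu : Measure (ℕ → Bool) :=
  Measure.map (fun x n => decide (⌊x * 2 ^ (n + 1)⌋ % 2 = 1))
    (volume.restrict (Set.Ico (0 : ℝ) 1))

/-- Action of a word on a state of an automaton. -/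
def act {S A : Type*} (f : S → A → S) (s : S) (w : List A) : S := w.foldl f s

/-- The run of a sequence `X` on the machine `(S, f, s₀)`. -/
def run {S : Type*} (f : S → Bool → S) (s₀ : S) (X : ℕ → Bool) : ℕ → S
  | 0 => s₀
  | n + 1 => f (run f s₀ X n) (X n)

/-- `t` is reachable from `s`. -/
def Reach {S : Type*} (f : S → Bool → S) (s t : S) : Prop := ∃ w : List Bool, act f s w = t

/-- The connected component of a state `s`. -/
def component {S : Type*} (f : S → Bool → S) (s : S) : Set S :=
  {t | Reach f s t ∧ Reach f t s}

/-- `g` is a leaf connected component. -/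
def IsLeafComponent {S : Type*} (f : S → Bool → S) (g : Set S) : Prop :=
  (∃ s, g = component f s) ∧ ∀ s ∈ g, ∀ t, Reach f s t → Reach f t s

/-- The word `w` occurs as a subword of the sequence `X`. -/
def Occurs (w : List Bool) (X : ℕ → Bool) : Prop :=
  ∃ n, ∀ k < w.length, X (n + k) = w.getD k false

/-- `X` is disjunctive: every word occurs in `X` as a subword. -/
def Disjunctive (X : ℕ → Bool) : Prop := ∀ w : List Bool, Occurs w X

/-- The word `w` is a prefix of the sequence `X`. -/
def IsPrefixOfSeq (w : List Bool) (X : ℕ → Bool) : Prop :=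
  ∀ k < w.length, X k = w.getD k false

/-- `[L]`: the set of sequences having some prefix in the language `L`. -/
def cyl (L : Set (List Bool)) : Set (ℕ → Bool) := {X | ∃ w ∈ L, IsPrefixOfSeq w X}

/-- `I(X)`: the set of states visited infinitely often by the run of `X`. -/
def InfOcc {S : Type*} (f : S → Bool → S) (s₀ : S) (X : ℕ → Bool) : Set S :=
  {s | ∃ᶠ n in atTop, run f s₀ X n = s}

/-- `X` is accepted by the deterministic Büchi automaton `(S, f, s₀, F)`. -/
def BuchiAccepts {S : Type*} (f : S → Bool → S) (s₀ : S) (F : Set S) (X : ℕ → Bool) : Prop :=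
  ∃ᶠ n in atTop, run f s₀ X n ∈ F

/-- A language is regular if it is accepted by a DFA with finitely many states. -/
def Regular {A : Type} (L : Set (List A)) : Prop :=
  ∃ (S : Type) (_ : Fintype S) (f : S → A → S) (s₀ : S) (F : Set S),
    L = {w | act f s₀ w ∈ F}

/-- The convolution of two words. -/
def conv (x i : List Bool) : List (Option Bool × Option Bool) :=
  (List.range (max x.length i.length)).map (fun k => (x[k]?, i[k]?))

/-- `(I, U)` is an automatic family. -/
def IsAutomaticFamily (I : Set (List Bool)) (U : List Bool → Set (List Bool)) : Prop :=
  Regular I ∧ Regular {c | ∃ i ∈ I, ∃ x ∈ U i, c = conv x i}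

/-- `(I, U)` is an automatic randomness test (ART). -/
def IsART (I : Set (List Bool)) (U : List Bool → Set (List Bool)) : Prop :=
  IsAutomaticFamily I U ∧ ∀ ε : ENNReal, 0 < ε → ∃ i ∈ I, mu (cyl (U i)) ≤ ε

/-- `(I, U)` is a Martin-Löf automatic randomness test (MART). -/
def IsMART (I : Set (List Bool)) (U : List Bool → Set (List Bool)) : Prop :=
  IsAutomaticFamily I U ∧ I.Infinite ∧
    ∀ i ∈ I, mu (cyl (U i)) ≤ (2 : ENNReal) ^ (-(i.length : ℤ))

/-- The covering region `F(I, U)` of a test. -/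
def coverRegion (I : Set (List Bool)) (U : List Bool → Set (List Bool)) : Set (ℕ → Bool) :=
  ⋂ i ∈ I, cyl (U i)
/-!
Almost every sequence is disjunctive: under `mu` the first `m * |w|` bits are uniformly
distributed (binary expansion sends the cylinder of a word of length `n` to a dyadic interval
of length `2⁻ⁿ`), so `w` is missing from `m` consecutive blocks with probability
`(1 - 2^{-|w|})^m → 0`.

A disjunctive sequence visits infinitely often every set `P` that each state can reach: one
word drives every state into `P` along some prefix, and that word occurs arbitrarily late.
Taking `P` to be the complement of `I(X)` shows that `I(X)` is closed under transitions, hence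
a leaf component; so if no leaf component is accepting, `L(M)` is null. Conversely, if a leaf
component `g` is accepting, reach it by a word `w`; for every disjunctive `X` with prefix `w`,
taking `P = {t}` inside `g` shows `I(X) = g`, so `L(M)` has measure at least `2^{-|w|}`.
-/

open scoped ENNReal

noncomputable def binaryDigits (x : ℝ) (n : ℕ) : Bool := decide (⌊x * 2 ^ (n + 1)⌋ % 2 = 1)

lemma mu_eq_map_binaryDigits : mu = (volume.restrict (Set.Ico (0 : ℝ) 1)).map binaryDigits := rfl

lemma measurable_binaryDigits : Measurable binaryDigits :=
  measurable_pi_lambda _ fun n =>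
    (measurable_from_top (f := fun z : ℤ => decide (z % 2 = 1))).comp
      (Int.measurable_floor.comp (measurable_id.mul_const (2 ^ (n + 1))))

def binaryValue (v : ℕ → Bool) : ℕ → ℕ
  | 0 => 0
  | n + 1 => 2 * binaryValue v n + (v n).toNat

lemma binaryValue_lt (v : ℕ → Bool) (n : ℕ) : binaryValue v n < 2 ^ n := by
  induction n with
  | zero => simp [binaryValue]
  | succ n ih => have := Bool.toNat_le (v n); simp only [binaryValue, pow_succ]; omega

lemma binaryValue_eq_iff {u v : ℕ → Bool} {n : ℕ} :
    binaryValue u n = binaryValue v n ↔ ∀ k < n, u k = v k := by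
  induction n with
  | zero => simp [binaryValue]
  | succ n ih =>
    simp only [binaryValue, Nat.lt_succ_iff_lt_or_eq, or_imp, forall_and, forall_eq, ← ih]
    cases u n <;> cases v n <;> simp <;> omega

lemma floor_two_mul_eq_or (y : ℝ) :
    ⌊2 * y⌋ = 2 * ⌊y⌋ ∨ ⌊2 * y⌋ = 2 * ⌊y⌋ + 1 := by
  have h₁ : 2 * ⌊y⌋ ≤ ⌊2 * y⌋ :=
    Int.le_floor.mpr (by push_cast; linarith [Int.floor_le y])
  have h₂ : ⌊2 * y⌋ < 2 * ⌊y⌋ + 2 :=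
    Int.floor_lt.mpr (by push_cast; linarith [Int.lt_floor_add_one y])
  omega

lemma floor_mul_two_pow_eq_binaryValue {x : ℝ} (hx : x ∈ Set.Ico (0 : ℝ) 1) (n : ℕ) :
    ⌊x * 2 ^ n⌋ = binaryValue (binaryDigits x) n := by
  induction n with
  | zero => simpa [binaryValue, Int.floor_eq_zero_iff] using hx
  | succ n ih =>
    have hdouble : x * 2 ^ (n + 1) = 2 * (x * 2 ^ n) := by ring
    simp only [binaryValue, binaryDigits, hdouble]
    push_cast
    rw [← ih]
    rcases floor_two_mul_eq_or (x * 2 ^ n) with h | h <;> rw [h] <;> simp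

def prefixFn (n : ℕ) (X : ℕ → Bool) : Fin n → Bool := fun k => X k

lemma measurable_prefixFn (n : ℕ) : Measurable (prefixFn n) :=
  measurable_pi_lambda _ fun k => measurable_pi_apply (k : ℕ)

lemma prefixFn_eq_iff {n : ℕ} {X Y : ℕ → Bool} :
    prefixFn n X = prefixFn n Y ↔ ∀ k < n, X k = Y k :=
  ⟨fun h k hk => congrFun h ⟨k, hk⟩, fun h => funext fun k => h k k.2⟩

lemma prefixFn_surjective (n : ℕ) : Function.Surjective (prefixFn n) :=
  fun u => ⟨fun k => if h : k < n then u ⟨k, h⟩ else false, funext fun k => dif_pos k.2⟩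

lemma binaryDigits_preimage_prefixFn (n : ℕ) (v : ℕ → Bool) :
    binaryDigits ⁻¹' (prefixFn n ⁻¹' {prefixFn n v}) ∩ Set.Ico 0 1 =
      Set.Ico (binaryValue v n / 2 ^ n : ℝ) ((binaryValue v n + 1) / 2 ^ n) := by
  have h2n : (0 : ℝ) < 2 ^ n := by positivity
  have hv : (binaryValue v n + 1 : ℝ) ≤ 2 ^ n := by exact_mod_cast binaryValue_lt v n
  have hsub : Set.Ico (binaryValue v n / 2 ^ n : ℝ) ((binaryValue v n + 1) / 2 ^ n) ⊆
      Set.Ico 0 1 := fun x ⟨h₁, h₂⟩ =>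
    ⟨le_trans (by positivity) h₁, h₂.trans_le ((div_le_one h2n).mpr hv)⟩
  ext x
  by_cases hx : x ∈ Set.Ico (0 : ℝ) 1
  · have hfloor :
        prefixFn n (binaryDigits x) = prefixFn n v ↔ ⌊x * 2 ^ n⌋ = binaryValue v n := by
      rw [prefixFn_eq_iff, ← binaryValue_eq_iff, floor_mul_two_pow_eq_binaryValue hx,
        Nat.cast_inj]
    simp only [Set.mem_inter_iff, Set.mem_preimage, Set.mem_singleton_iff, hfloor, hx, and_true,
      Int.floor_eq_iff, Set.mem_Ico, div_le_iff₀ h2n, lt_div_iff₀ h2n]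
    push_cast
    rfl
  · exact iff_of_false (fun h => hx h.2) (fun h => hx (hsub h))

lemma mu_preimage_prefixFn_singleton (n : ℕ) (u : Fin n → Bool) :
    mu (prefixFn n ⁻¹' {u}) = (2 ^ n)⁻¹ := by
  obtain ⟨v, rfl⟩ := prefixFn_surjective n u
  have hmeas : MeasurableSet (prefixFn n ⁻¹' {prefixFn n v}) :=
    measurable_prefixFn n (measurableSet_singleton _)
  rw [mu_eq_map_binaryDigits, Measure.map_apply measurable_binaryDigits hmeas,
    Measure.restrict_apply (measurable_binaryDigits hmeas), binaryDigits_preimage_prefixFn,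
    Real.volume_Ico, ← sub_div, add_sub_cancel_left, ENNReal.ofReal_div_of_pos (by positivity)]
  simp [ENNReal.ofReal_pow]

lemma map_prefixFn_mu (n : ℕ) :
    mu.map (prefixFn n) = ((2 : ℝ≥0∞) ^ n)⁻¹ • Measure.count := by
  refine Measure.ext_iff_singleton.mpr fun u => ?_
  rw [Measure.map_apply (measurable_prefixFn n) (measurableSet_singleton u),
    mu_preimage_prefixFn_singleton]
  simp

lemma mu_preimage_prefixFn (n : ℕ) (A : Finset (Fin n → Bool)) :
    mu (prefixFn n ⁻¹' A) = A.card * (2 ^ n)⁻¹ := by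
  rw [← Measure.map_apply (measurable_prefixFn n) (Finset.measurableSet A), map_prefixFn_mu,
    Measure.smul_apply, Measure.count_apply_finset, smul_eq_mul, mul_comm]

lemma mu_isPrefixOfSeq (w : List Bool) : mu {X | IsPrefixOfSeq w X} = (2 ^ w.length)⁻¹ := by
  have : {X | IsPrefixOfSeq w X} =
      prefixFn w.length ⁻¹' {prefixFn w.length (w.getD · false)} :=
    Set.ext fun _ => prefixFn_eq_iff.symm
  rw [this, mu_preimage_prefixFn_singleton]

lemma card_forall_ne {ι β : Type*} [Fintype ι] [Fintype β] (b : β)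
    [Fintype {u : ι → β // ∀ j, u j ≠ b}] :
    Fintype.card {u : ι → β // ∀ j, u j ≠ b} = (Fintype.card β - 1) ^ Fintype.card ι := by
  classical
  rw [Fintype.card_congr (Equiv.subtypePiEquivPi (p := fun (_ : ι) u => u ≠ b)), Fintype.card_pi,
    Finset.prod_const, Finset.card_univ]
  exact congrArg (· ^ _) (Set.card_ne_eq b)

def blocksEquiv (α : Type*) (m L : ℕ) : (Fin (m * L) → α) ≃ (Fin m → Fin L → α) :=
  (finProdFinEquiv.symm.arrowCongr (Equiv.refl α)).trans (Equiv.curry _ _ _)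

/-- Cut the first `m * |w|` bits into `m` blocks of length `|w|`: if `w` does not occur, no block
equals `w`. -/
lemma mu_not_occurs_le (w : List Bool) (m : ℕ) :
    mu {X | ¬ Occurs w X} ≤ (((2 ^ w.length - 1 : ℕ) : ℝ≥0∞) / 2 ^ w.length) ^ m := by
  set L := w.length
  let wf : Fin L → Bool := fun k => w.getD k false
  let A : Finset (Fin (m * L) → Bool) :=
    Finset.univ.filter fun u => ∀ j, blocksEquiv Bool m L u j ≠ wf
  have hsub : {X | ¬ Occurs w X} ⊆ prefixFn (m * L) ⁻¹' A := by
    intro X hX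
    simp only [Set.mem_preimage, Finset.coe_filter, Finset.mem_univ, true_and, Set.mem_ofPred_eq,
      A]
    intro j hj
    refine hX ⟨L * j, fun k hk => ?_⟩
    have := congrFun hj ⟨k, hk⟩
    simpa [blocksEquiv, prefixFn, finProdFinEquiv, add_comm, wf] using this
  have hcard : A.card = (2 ^ L - 1) ^ m := by
    rw [← Fintype.card_subtype, Fintype.card_congr ((blocksEquiv Bool m L).subtypeEquiv
      (q := fun h => ∀ j, h j ≠ wf) fun _ => Iff.rfl), card_forall_ne]
    simp
  calc mu {X | ¬ Occurs w X} ≤ mu (prefixFn (m * L) ⁻¹' A) := measure_mono hsub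
    _ = ((2 ^ L - 1 : ℕ) : ℝ≥0∞) ^ m * ((2 : ℝ≥0∞) ^ (m * L))⁻¹ := by
      rw [mu_preimage_prefixFn, hcard, Nat.cast_pow]
    _ = _ := by rw [div_eq_mul_inv, mul_pow, ← ENNReal.inv_pow, ← pow_mul, mul_comm L m]

lemma mu_not_occurs (w : List Bool) : mu {X | ¬ Occurs w X} = 0 := by
  have hlt : ((2 ^ w.length - 1 : ℕ) : ℝ≥0∞) / 2 ^ w.length < 1 := by
    rw [ENNReal.div_lt_iff (by simp) (by simp), one_mul]
    exact_mod_cast Nat.sub_lt (by positivity) one_pos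
  exact nonpos_iff_eq_zero.mp <|
    ge_of_tendsto' (ENNReal.tendsto_pow_atTop_nhds_zero_of_lt_one hlt) (mu_not_occurs_le w)

lemma mu_not_disjunctive : mu {X | ¬ Disjunctive X} = 0 := by
  simp only [Disjunctive, not_forall, Set.ofPred_exists]
  exact measure_iUnion_null mu_not_occurs

def OccursAt (w : List Bool) (X : ℕ → Bool) (n : ℕ) : Prop :=
  ∀ k < w.length, X (n + k) = w.getD k false

def window (X : ℕ → Bool) (n k : ℕ) : List Bool := (List.range k).map fun i => X (n + i)

lemma OccursAt.of_prefix {u v : List Bool} {X : ℕ → Bool} {n : ℕ} (h : OccursAt v X n)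
    (huv : u <+: v) : OccursAt u X n := fun k hk => by
  rw [h k (hk.trans_le huv.length_le), List.getD_eq_getElem _ _ hk,
    List.getD_eq_getElem _ _ (hk.trans_le huv.length_le), huv.getElem]

lemma OccursAt.window_eq {w : List Bool} {X : ℕ → Bool} {n : ℕ} (h : OccursAt w X n) :
    window X n w.length = w :=
  List.ext_getElem (by simp [window]) fun k hk _ => by
    simp only [window, List.getElem_map, List.getElem_range]
    rw [h k (by simpa [window] using hk), List.getD_eq_getElem]

lemma Disjunctive.exists_occursAt_ge {X : ℕ → Bool} (hX : Disjunctive X) (w : List Bool)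
    (N : ℕ) : ∃ n ≥ N, OccursAt w X n := by
  obtain ⟨p, hp⟩ := hX (List.replicate N false ++ w)
  refine ⟨p + N, by omega, fun k hk => ?_⟩
  have := hp (N + k) (by simp; omega)
  rwa [← add_assoc, List.getD_append_right _ _ _ _ (by simp), List.length_replicate,
    Nat.add_sub_cancel_left] at this

section Automaton

variable {S : Type*} {f : S → Bool → S}

lemma act_append (s : S) (v w : List Bool) : act f s (v ++ w) = act f (act f s v) w :=
  List.foldl_append ..

lemma Reach.trans {s t u : S} : Reach f s t → Reach f t u → Reach f s u
  | ⟨v, hv⟩, ⟨w, hw⟩ => ⟨v ++ w, by rw [act_append, hv, hw]⟩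

variable (f) in
lemma run_add (s₀ : S) (X : ℕ → Bool) (n k : ℕ) :
    run f s₀ X (n + k) = act f (run f s₀ X n) (window X n k) := by
  induction k with
  | zero => rfl
  | succ k ih =>
    rw [← add_assoc, run, ih, window, window, List.range_succ, List.map_append, act_append]
    rfl

variable (f) in
lemma run_length_of_isPrefixOfSeq (s₀ : S) {X : ℕ → Bool} {w : List Bool}
    (h : IsPrefixOfSeq w X) : run f s₀ X w.length = act f s₀ w := by
  have hocc : OccursAt w X 0 := fun k hk => by simpa using h k hk
  rw [← zero_add w.length, run_add, hocc.window_eq]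
  rfl

/-- Words are extended at the end, so a prefix that already led a state into `P` stays one. -/
lemma exists_word_forall_prefix_mem [Finite S] {P : Set S} (hP : ∀ q, ∃ w, act f q w ∈ P) :
    ∃ v : List Bool, ∀ q, ∃ u, u <+: v ∧ act f q u ∈ P := by
  have key (l : List S) : ∃ v : List Bool, ∀ q ∈ l, ∃ u, u <+: v ∧ act f q u ∈ P := by
    induction l with
    | nil => exact ⟨[], by simp⟩
    | cons q l ih =>
      obtain ⟨v, hv⟩ := ih
      obtain ⟨w, hw⟩ := hP (act f q v)
      refine ⟨v ++ w, fun p hp => ?_⟩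
      rcases List.mem_cons.mp hp with rfl | hp
      · exact ⟨v ++ w, List.prefix_refl _, by rwa [act_append]⟩
      · obtain ⟨u, hu, huP⟩ := hv p hp
        exact ⟨u, hu.trans (List.prefix_append v w), huP⟩
  have := Fintype.ofFinite S
  obtain ⟨v, hv⟩ := key Finset.univ.toList
  exact ⟨v, fun q => hv q (Finset.mem_toList.mpr (Finset.mem_univ q))⟩

variable (f) in
lemma Disjunctive.frequently_run_mem [Finite S] {X : ℕ → Bool} (hX : Disjunctive X)
    (s₀ : S) {P : Set S} (hP : ∀ q, ∃ w, act f q w ∈ P) :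
    ∃ᶠ n in atTop, run f s₀ X n ∈ P := by
  obtain ⟨v, hv⟩ := exists_word_forall_prefix_mem hP
  refine frequently_atTop.mpr fun N => ?_
  obtain ⟨n, hn, hocc⟩ := hX.exists_occursAt_ge v N
  obtain ⟨u, hu, huP⟩ := hv (run f s₀ X n)
  exact ⟨n + u.length, by omega, by rwa [run_add, (hocc.of_prefix hu).window_eq]⟩

variable (f) in
lemma eventually_run_mem_infOcc [Finite S] (s₀ : S) (X : ℕ → Bool) :
    ∀ᶠ n in atTop, run f s₀ X n ∈ InfOcc f s₀ X := by
  have : ∀ᶠ n in atTop, ∀ s, s ∉ InfOcc f s₀ X → run f s₀ X n ≠ s :=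
    eventually_all.mpr fun s => by
      by_cases hs : s ∈ InfOcc f s₀ X
      · exact .of_forall fun _ h => (h hs).elim
      · exact (not_frequently.mp hs).mono fun _ h _ => h
  filter_upwards [this] with n hn using by_contra fun h => hn _ h rfl

lemma reach_of_mem_infOcc {s₀ : S} {X : ℕ → Bool} {s t : S} (hs : s ∈ InfOcc f s₀ X)
    (ht : t ∈ InfOcc f s₀ X) : Reach f s t := by
  obtain ⟨n₁, rfl⟩ := hs.exists
  obtain ⟨n₂, hn, rfl⟩ := frequently_atTop.mp ht n₁
  exact ⟨window X n₁ (n₂ - n₁), by rw [← run_add, Nat.add_sub_cancel' hn]⟩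

lemma act_mem_of_forall_mem {g : Set S} (hg : ∀ q ∈ g, ∀ b, f q b ∈ g) (w : List Bool) :
    ∀ q ∈ g, act f q w ∈ g := by
  induction w with
  | nil => exact fun q hq => hq
  | cons b w ih => exact fun q hq => ih _ (hg q hq b)

variable (f) in
lemma Disjunctive.apply_mem_infOcc [Finite S] {X : ℕ → Bool} (hX : Disjunctive X) (s₀ : S)
    {s : S} (hs : s ∈ InfOcc f s₀ X) (b : Bool) : f s b ∈ InfOcc f s₀ X := by
  by_contra hb
  have hP : ∀ q, ∃ w, act f q w ∈ (InfOcc f s₀ X)ᶜ := fun q => by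
    by_cases hq : q ∈ InfOcc f s₀ X
    · obtain ⟨w, hw⟩ := reach_of_mem_infOcc hq hs
      exact ⟨w ++ [b], by rwa [act_append, hw]⟩
    · exact ⟨[], hq⟩
  obtain ⟨n, hout, hin⟩ :=
    ((hX.frequently_run_mem f s₀ hP).and_eventually (eventually_run_mem_infOcc f s₀ X)).exists
  exact hout hin

variable (f) in
lemma Disjunctive.isLeafComponent_infOcc [Finite S] {X : ℕ → Bool} (hX : Disjunctive X)
    (s₀ : S) : IsLeafComponent f (InfOcc f s₀ X) := by
  have hclosed {q t : S} (hq : q ∈ InfOcc f s₀ X) : Reach f q t → t ∈ InfOcc f s₀ X :=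
    fun ⟨w, hw⟩ =>
      hw ▸ act_mem_of_forall_mem (fun _ hq => hX.apply_mem_infOcc f s₀ hq) w q hq
  obtain ⟨n, hn⟩ := (eventually_run_mem_infOcc f s₀ X).exists
  refine ⟨⟨run f s₀ X n, Set.ext fun t => ⟨fun ht => ?_, fun ht => hclosed hn ht.1⟩⟩,
    fun q hq t hqt => reach_of_mem_infOcc (hclosed hq hqt) hq⟩
  exact ⟨reach_of_mem_infOcc hn ht, reach_of_mem_infOcc ht hn⟩

lemma IsLeafComponent.mem_of_reach {g : Set S} (hg : IsLeafComponent f g) {s t : S}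
    (hs : s ∈ g) (hst : Reach f s t) : t ∈ g := by
  obtain ⟨⟨c, rfl⟩, hleaf⟩ := hg
  exact ⟨hs.1.trans hst, (hleaf s hs t hst).trans hs.2⟩

lemma IsLeafComponent.reach {g : Set S} (hg : IsLeafComponent f g) {s t : S}
    (hs : s ∈ g) (ht : t ∈ g) : Reach f s t := by
  obtain ⟨⟨c, rfl⟩, -⟩ := hg
  exact hs.2.trans ht.1

lemma Disjunctive.infOcc_eq_of_run_mem [Finite S] {X : ℕ → Bool} (hX : Disjunctive X)
    {s₀ : S} {g : Set S} (hg : IsLeafComponent f g) {n : ℕ} (hn : run f s₀ X n ∈ g) :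
    InfOcc f s₀ X = g := by
  have hstay : ∀ᶠ m in atTop, run f s₀ X m ∈ g := eventually_atTop.mpr ⟨n, fun m hm =>
    hg.mem_of_reach hn ⟨window X n (m - n), by rw [← run_add, Nat.add_sub_cancel' hm]⟩⟩
  ext t
  refine ⟨fun ht => ?_, fun ht => ?_⟩
  · obtain ⟨m, hm, hmg⟩ := (Frequently.and_eventually ht hstay).exists
    exact hm ▸ hmg
  · have hP : ∀ q, ∃ w, act f q w ∈ {q | q ∈ g → q = t} := fun q => by
      by_cases hq : q ∈ g
      · obtain ⟨w, hw⟩ := hg.reach hq ht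
        exact ⟨w, fun _ => hw⟩
      · exact ⟨[], fun h => (hq h).elim⟩
    exact ((hX.frequently_run_mem f s₀ hP).and_eventually hstay).mono fun _ h => h.1 h.2

end Automaton

/-- A deterministic Muller automaton (with all states reachable) has
measure-zero language iff no leaf connected component belongs to the accepting collection. -/
theorem stmt7 {S : Type} [Fintype S] (f : S → Bool → S) (s₀ : S) (𝔉 : Set (Set S))
    (hreach : ∀ s : S, Reach f s₀ s) :
    mu {X : ℕ → Bool | InfOcc f s₀ X ∈ 𝔉} = 0 ↔
      ∀ g : Set S, IsLeafComponent f g → g ∉ 𝔉 := by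
  constructor
  · intro hnull g hg hgF
    obtain ⟨s, hgs⟩ := hg.1
    obtain ⟨w, hw⟩ := hreach s
    have hsub :
        {X | IsPrefixOfSeq w X} ⊆ {X | InfOcc f s₀ X ∈ 𝔉} ∪ {X | ¬ Disjunctive X} := by
      intro X hpre
      by_cases hX : Disjunctive X
      · have hrun : run f s₀ X w.length ∈ g := by
          rw [run_length_of_isPrefixOfSeq f s₀ hpre, hw, hgs]
          exact ⟨⟨[], rfl⟩, ⟨[], rfl⟩⟩
        exact Or.inl (show InfOcc f s₀ X ∈ 𝔉 from hX.infOcc_eq_of_run_mem hg hrun ▸ hgF)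
      · exact Or.inr hX
    have := measure_mono_null hsub (measure_union_null hnull mu_not_disjunctive)
    simp [mu_isPrefixOfSeq] at this
  · intro hno
    refine measure_mono_null ?_ mu_not_disjunctive
    intro X hX hdisj
    exact hno _ (Disjunctive.isLeafComponent_infOcc f hdisj s₀) hX
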